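/- arXiv:0811.4028 — 3 statements merged into one kernel-verified Lean document; each statement's English description precedes it below -/
import Mathlib

section
/- Let f : [0,∞) → ℝ be a differentiable function satisfying f'(t) = (2/n) f(t)(f(t) − r(t)) for a continuous function r with f(t) ≤ r(t) for all t, and suppose f(0) < 0. Then f is monotone non-decreasing and f(0) ≤ f(t) ≤ r(t) for all t ≥ 0. -/
/-!
Since `f * f' = (2 / n) f² (f - r) ≤ 0`, the square `f²` is non-increasing. Hence once `f`
vanishes it stays zero, so by the intermediate value theorem `f` can never become positive.
On the other hand, while `f ≤ 0 ≤ r - f` the right-hand side `(2 / n) f (f - r)` is nonnegative,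
so `f` is non-decreasing.
-/

open Set

lemma antitoneOn_sq_of_mul_deriv_nonpos {D : Set ℝ} (hD : Convex ℝ D) {f f' : ℝ → ℝ}
    (hf : ∀ x ∈ D, HasDerivAt f (f' x) x) (hff' : ∀ x ∈ D, f x * f' x ≤ 0) :
    AntitoneOn (fun x => f x ^ 2) D := by
  have hsq : ∀ x ∈ D, HasDerivAt (fun x => f x ^ 2) (2 * (f x * f' x)) x := fun x hx =>
    ((hf x hx).fun_pow 2).congr_deriv (by ring)
  refine antitoneOn_of_hasDerivWithinAt_nonpos hD
    (fun x hx => (hsq x hx).continuousAt.continuousWithinAt)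
    (fun x hx => (hsq x (interior_subset hx)).hasDerivWithinAt) fun x hx => ?_
  have := hff' x (interior_subset hx)
  linarith

lemma nonpos_of_antitoneOn_sq {f : ℝ → ℝ} {a : ℝ} (hf : ContinuousOn f (Ici a))
    (hsq : AntitoneOn (fun x => f x ^ 2) (Ici a)) (ha : f a ≤ 0) {t : ℝ} (ht : a ≤ t) :
    f t ≤ 0 := by
  by_contra! hpos
  obtain ⟨z, ⟨haz, hzt⟩, hfz⟩ :=
    intermediate_value_Icc ht (hf.mono Icc_subset_Ici_self) ⟨ha, hpos.le⟩
  have : f t ^ 2 ≤ f z ^ 2 := hsq haz (haz.trans hzt) hzt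
  rw [hfz] at this
  nlinarith

theorem stmt_0_general (n : ℕ) (f r : ℝ → ℝ)
    (hderiv : ∀ t, 0 ≤ t → HasDerivAt f ((2 / (n : ℝ)) * f t * (f t - r t)) t)
    (hfr : ∀ t, 0 ≤ t → f t ≤ r t) (hf0 : f 0 < 0) :
    (∀ s t : ℝ, 0 ≤ s → s ≤ t → f s ≤ f t) ∧
      (∀ t : ℝ, 0 ≤ t → f 0 ≤ f t ∧ f t ≤ r t) := by
  have hc : (0 : ℝ) ≤ 2 / n := by positivity
  have hcont : ContinuousOn f (Ici 0) := fun t ht =>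
    (hderiv t ht).continuousAt.continuousWithinAt
  have hsq : AntitoneOn (fun t => f t ^ 2) (Ici 0) :=
    antitoneOn_sq_of_mul_deriv_nonpos (convex_Ici 0) hderiv fun t ht => by
      have : 0 ≤ r t - f t := sub_nonneg.2 (hfr t ht)
      nlinarith [mul_nonneg (mul_nonneg hc (sq_nonneg (f t))) this]
  have hle0 : ∀ t, 0 ≤ t → f t ≤ 0 := fun t ht =>
    nonpos_of_antitoneOn_sq hcont hsq hf0.le ht
  have hmono : MonotoneOn f (Ici 0) := by
    refine monotoneOn_of_hasDerivWithinAt_nonneg (convex_Ici 0) hcont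
      (fun t ht => (hderiv t (interior_subset ht)).hasDerivWithinAt) fun t ht => ?_
    have ht : (0 : ℝ) ≤ t := interior_subset ht
    have : 0 ≤ r t - f t := sub_nonneg.2 (hfr t ht)
    nlinarith [mul_nonneg (mul_nonneg hc (neg_nonneg.2 (hle0 t ht))) this]
  exact ⟨fun s t hs hst => hmono hs (hs.trans hst) hst,
    fun t ht => ⟨hmono self_mem_Ici ht ht, hfr t ht⟩⟩

theorem stmt_0 (n : ℕ) (hn : 1 ≤ n) (f r : ℝ → ℝ) (hr : Continuous r)
    (hderiv : ∀ t, 0 ≤ t → HasDerivAt f ((2 / (n : ℝ)) * f t * (f t - r t)) t)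
    (hfr : ∀ t, 0 ≤ t → f t ≤ r t) (hf0 : f 0 < 0) :
    (∀ s t : ℝ, 0 ≤ s → s ≤ t → f s ≤ f t) ∧
      (∀ t : ℝ, 0 ≤ t → f 0 ≤ f t ∧ f t ≤ r t) :=
  stmt_0_general n f r hderiv hfr hf0
end

section
/- Let f : [0,∞) → ℝ solve f'(t) = (2/n) f(t)(f(t) − r(t)) with f(t) ≤ −c < 0 for all t ≥ 0, where r is continuous with f ≤ r. Then ∫₀^∞ (r(t) − f(t)) dt ≤ (n/(2c)) (−f(0) − c) < ∞. -/
open MeasureTheory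

theorem stmt_1 (n : ℕ) (hn : 1 ≤ n) (c : ℝ) (hc : 0 < c) (f r : ℝ → ℝ)
    (hr : Continuous r)
    (hderiv : ∀ t, 0 ≤ t → HasDerivAt f ((2 / (n : ℝ)) * f t * (f t - r t)) t)
    (hfr : ∀ t, 0 ≤ t → f t ≤ r t)
    (hfc : ∀ t, 0 ≤ t → f t ≤ -c) :
    IntegrableOn (fun t => r t - f t) (Set.Ioi (0 : ℝ)) ∧
      (∫ t in Set.Ioi (0 : ℝ), (r t - f t)) ≤ ((n : ℝ) / (2 * c)) * (-f 0 - c) := by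
  set N : ℝ := (n : ℝ) with hNdef
  have hN : (1 : ℝ) ≤ N := by rw [hNdef]; exact_mod_cast hn
  have hN0 : (0 : ℝ) < N := lt_of_lt_of_le one_pos hN
  set K : ℝ := N / (2 * c) * (-f 0 - c) with hKdef
  have hKpos : 0 ≤ N / (2 * c) := by positivity
  -- continuity of f on Ici 0
  have hfcont : ContinuousOn f (Set.Ici (0 : ℝ)) := fun t ht =>
    ((hderiv t ht).continuousAt).continuousWithinAt
  have hgcont : ContinuousOn (fun t => r t - f t) (Set.Ici (0 : ℝ)) :=
    hr.continuousOn.sub hfcont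
  -- integrability on each Ioc 0 T
  have hfi : ∀ T : ℝ, IntegrableOn (fun t => r t - f t) (Set.Ioc 0 T) := by
    intro T
    rcases le_or_gt T 0 with h | h
    · rw [Set.Ioc_eq_empty (by exact fun hlt => absurd h (not_le.mpr hlt))]
      simp
    · exact (hgcont.mono (Set.Icc_subset_Ici_self)).integrableOn_Icc.mono_set
        (Set.Ioc_subset_Icc_self.trans (Set.Icc_subset_Icc_left le_rfl))
  -- key bound for interval integrals
  have hbound : ∀ T : ℝ, 0 ≤ T → (∫ t in (0:ℝ)..T, (r t - f t)) ≤ K := by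
    intro T hT
    have hset : Set.uIcc (0:ℝ) T = Set.Icc 0 T := Set.uIcc_of_le hT
    have hf'cont : ContinuousOn (fun t => 2 / N * f t * (f t - r t)) (Set.Icc 0 T) :=
      ((continuousOn_const.mul (hfcont.mono Set.Icc_subset_Ici_self)).mul
        ((hfcont.mono Set.Icc_subset_Ici_self).sub (hr.continuousOn)))
    have hint1 : IntervalIntegrable (fun t => r t - f t) volume 0 T := by
      rw [intervalIntegrable_iff_integrableOn_Ioc_of_le hT]; exact hfi T
    have hint2 : IntervalIntegrable (fun t => N / (2 * c) * (2 / N * f t * (f t - r t)))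
        volume 0 T := by
      apply ContinuousOn.intervalIntegrable
      rw [hset]
      exact continuousOn_const.mul hf'cont
    have hmono : ∫ t in (0:ℝ)..T, (r t - f t) ≤
        ∫ t in (0:ℝ)..T, N / (2 * c) * (2 / N * f t * (f t - r t)) := by
      apply intervalIntegral.integral_mono_on hT hint1 hint2
      intro t ht
      have h1 : f t ≤ -c := hfc t ht.1
      have h2 : f t ≤ r t := hfr t ht.1
      have heq : N / (2 * c) * (2 / N * f t * (f t - r t))
          = (1 / c) * ((- f t) * (r t - f t)) := by
        field_simp
        ring
      rw [heq]
      have h3 : c ≤ -f t := by linarith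
      have h4 : 0 ≤ r t - f t := by linarith
      rw [one_div, inv_mul_eq_div, le_div_iff₀ hc]
      nlinarith
    have hftc : ∫ t in (0:ℝ)..T, (2 / N * f t * (f t - r t)) = f T - f 0 := by
      apply intervalIntegral.integral_eq_sub_of_hasDerivAt
      · intro x hx
        rw [hset] at hx
        exact hderiv x hx.1
      · apply ContinuousOn.intervalIntegrable
        rw [hset]; exact hf'cont
    have : ∫ t in (0:ℝ)..T, N / (2 * c) * (2 / N * f t * (f t - r t))
        = N / (2 * c) * (f T - f 0) := by
      rw [intervalIntegral.integral_const_mul, hftc]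
    rw [this] at hmono
    have hfT : f T ≤ -c := hfc T hT
    have : N / (2 * c) * (f T - f 0) ≤ K := by
      rw [hKdef]
      apply mul_le_mul_of_nonneg_left _ hKpos
      linarith
    linarith
  -- nonnegativity allows replacing ‖·‖
  have hnormeq : ∀ T : ℝ, 0 ≤ T →
      (∫ t in (0:ℝ)..T, ‖r t - f t‖) = ∫ t in (0:ℝ)..T, (r t - f t) := by
    intro T hT
    rw [intervalIntegral.integral_of_le hT, intervalIntegral.integral_of_le hT]
    apply setIntegral_congr_fun measurableSet_Ioc
    intro t ht
    exact Real.norm_of_nonneg (by linarith [hfr t (le_of_lt ht.1)])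
  have hInt : IntegrableOn (fun t => r t - f t) (Set.Ioi (0 : ℝ)) := by
    apply integrableOn_Ioi_of_intervalIntegral_norm_bounded K 0 hfi
      Filter.tendsto_id
    filter_upwards [Filter.eventually_ge_atTop (0:ℝ)] with T hT
    rw [hnormeq T hT]
    exact hbound T hT
  refine ⟨hInt, ?_⟩
  have htend := intervalIntegral_tendsto_integral_Ioi 0 hInt Filter.tendsto_id
  apply le_of_tendsto htend
  filter_upwards [Filter.eventually_ge_atTop (0:ℝ)] with T hT
  exact hbound T hT
end

section
/- Let r : [0,∞) → ℝ be continuous with δ ≤ r(t) ≤ C (0 < δ ≤ C), and let ψ, t̃, T̃ be as above. Then the rescaled quantity r̃(t̃) := r(t) ψ(t)^{−1} satisfies r̃(t̃) · (T̃ − t̃) ≤ C n/(2δ) for all t̃ < T̃. -/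
/-!
Since `r ≥ δ`, the exponent `∫₀ᵗ (2/n) r` grows at least at rate `k = 2δ/n`, so `ψ` decays at least
like `e^{-k t}` from any starting time: `ψ s ≤ ψ t e^{-k (s - t)}` for `s ≥ t ≥ 0`. Hence
`T̃ - t̃ = ∫ₜ^∞ ψ ≤ ψ t / k`, and `r t ψ(t)⁻¹ (T̃ - t̃) ≤ r t / k ≤ C n / (2δ)`.
-/

open MeasureTheory Set Real

section ExponentialTail

variable {f : ℝ → ℝ} {a k M : ℝ}

theorem integral_exp_neg_mul_sub_Ioi (hk : 0 < k) (a : ℝ) :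
    ∫ x in Ioi a, exp (-k * (x - a)) = k⁻¹ := by
  have hsplit : ∀ x, exp (-k * (x - a)) = exp (k * a) * exp (-k * x) := fun x => by
    rw [← exp_add]; ring_nf
  simp_rw [hsplit]
  rw [integral_const_mul, integral_exp_mul_Ioi (neg_lt_zero.2 hk), neg_div_neg_eq,
    mul_div_assoc', ← exp_add, show k * a + -k * a = 0 by ring, exp_zero, one_div]

theorem integrableOn_exp_neg_mul_sub_Ioi (hk : 0 < k) (a : ℝ) :
    IntegrableOn (fun x => exp (-k * (x - a))) (Ioi a) :=
  Integrable.of_integral_ne_zero <| by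
    rw [integral_exp_neg_mul_sub_Ioi hk]; exact inv_ne_zero hk.ne'

theorem integrableOn_Ioi_of_norm_le_mul_exp (hk : 0 < k)
    (hf : AEStronglyMeasurable f (volume.restrict (Ioi a)))
    (hle : ∀ x, a < x → ‖f x‖ ≤ M * exp (-k * (x - a))) :
    IntegrableOn f (Ioi a) :=
  Integrable.mono' ((integrableOn_exp_neg_mul_sub_Ioi hk a).const_mul M) hf <|
    (ae_restrict_mem measurableSet_Ioi).mono hle

theorem setIntegral_Ioi_le_of_norm_le_mul_exp (hk : 0 < k)
    (hf : AEStronglyMeasurable f (volume.restrict (Ioi a)))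
    (hle : ∀ x, a < x → ‖f x‖ ≤ M * exp (-k * (x - a))) :
    ∫ x in Ioi a, f x ≤ M / k := by
  calc ∫ x in Ioi a, f x ≤ ∫ x in Ioi a, M * exp (-k * (x - a)) :=
        setIntegral_mono_on (integrableOn_Ioi_of_norm_le_mul_exp hk hf hle)
          ((integrableOn_exp_neg_mul_sub_Ioi hk a).const_mul M) measurableSet_Ioi
          fun x hx => (le_norm_self (f x)).trans (hle x hx)
    _ = M / k := by rw [integral_const_mul, integral_exp_neg_mul_sub_Ioi hk, div_eq_mul_inv]

end ExponentialTail

theorem exp_neg_integral_le_mul_exp {g : ℝ → ℝ} {k t s : ℝ} (hg : Continuous g) (hts : t ≤ s)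
    (hkg : ∀ x ∈ Icc t s, k ≤ g x) :
    exp (-∫ x in 0..s, g x) ≤ exp (-∫ x in 0..t, g x) * exp (-k * (s - t)) := by
  have hgrowth : k * (s - t) ≤ ∫ x in t..s, g x := by
    simpa [mul_comm] using intervalIntegral.integral_mono_on hts
      (intervalIntegrable_const (μ := volume)) (hg.intervalIntegrable t s) hkg
  have hsplit : (∫ x in 0..s, g x) - ∫ x in 0..t, g x = ∫ x in t..s, g x :=
    intervalIntegral.integral_interval_sub_left (hg.intervalIntegrable 0 s)
      (hg.intervalIntegrable 0 t)
  rw [← exp_add, exp_le_exp]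
  linarith

theorem stmt_4_general (n : ℕ) (hn : 1 ≤ n) (δ C : ℝ) (hδ : 0 < δ)
    (r : ℝ → ℝ) (hr : Continuous r)
    (hbd : ∀ t, 0 ≤ t → δ ≤ r t ∧ r t ≤ C)
    (ψ : ℝ → ℝ)
    (hψ : ∀ t, ψ t = Real.exp (-(∫ s in (0:ℝ)..t, (2 / (n : ℝ)) * r s))) :
    ∀ t, 0 ≤ t →
      r t * (ψ t)⁻¹ * ((∫ s in Set.Ioi (0 : ℝ), ψ s) - ∫ s in (0:ℝ)..t, ψ s) ≤
        C * (n : ℝ) / (2 * δ) := by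
  set k : ℝ := 2 * δ / n
  have hk : 0 < k := by positivity
  have hg : Continuous fun s => 2 / (n : ℝ) * r s := continuous_const.mul hr
  have hψc : Continuous ψ := by
    rw [funext hψ]
    exact (intervalIntegral.continuous_primitive (fun a b => hg.intervalIntegrable a b) 0).neg.rexp
  have hdecay : ∀ a x, 0 ≤ a → a < x → ‖ψ x‖ ≤ ψ a * exp (-k * (x - a)) := fun a x ha hax => by
    rw [norm_of_nonneg (hψ x ▸ (exp_pos _).le), hψ, hψ]
    refine exp_neg_integral_le_mul_exp hg hax.le fun y hy => ?_
    have := (hbd y (ha.trans hy.1)).1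
    calc k = 2 / n * δ := by ring
      _ ≤ 2 / n * r y := by gcongr
  have hint : IntegrableOn ψ (Ioi 0) :=
    integrableOn_Ioi_of_norm_le_mul_exp hk hψc.aestronglyMeasurable (hdecay 0 · le_rfl)
  intro t ht
  have htail : ∫ s in Ioi t, ψ s ≤ ψ t / k :=
    setIntegral_Ioi_le_of_norm_le_mul_exp hk hψc.aestronglyMeasurable (hdecay t · ht)
  have hψt : 0 < ψ t := hψ t ▸ exp_pos _
  obtain ⟨hδr, hrC⟩ := hbd t ht
  rw [← intervalIntegral.integral_Ioi_sub_Ioi hint ht, sub_sub_cancel]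
  calc r t * (ψ t)⁻¹ * ∫ s in Ioi t, ψ s ≤ r t * (ψ t)⁻¹ * (ψ t / k) := by
        have : 0 < r t := hδ.trans_le hδr
        gcongr
    _ = r t / k := by field_simp
    _ ≤ C / k := by gcongr
    _ = C * n / (2 * δ) := by rw [div_div_eq_mul_div]

theorem stmt_4 (n : ℕ) (hn : 1 ≤ n) (δ C : ℝ) (hδ : 0 < δ) (hδC : δ ≤ C)
    (r : ℝ → ℝ) (hr : Continuous r)
    (hbd : ∀ t, 0 ≤ t → δ ≤ r t ∧ r t ≤ C)
    (ψ : ℝ → ℝ)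
    (hψ : ∀ t, ψ t = Real.exp (-(∫ s in (0:ℝ)..t, (2 / (n : ℝ)) * r s))) :
    ∀ t, 0 ≤ t →
      r t * (ψ t)⁻¹ * ((∫ s in Set.Ioi (0 : ℝ), ψ s) - ∫ s in (0:ℝ)..t, ψ s) ≤
        C * (n : ℝ) / (2 * δ) :=
  stmt_4_general n hn δ C hδ r hr hbd ψ hψ
end
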